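/- For every general preference Ψ, the recursively defined weight function w_Ψ is admissible: for all trajectories α and β, if α ≺_Ψ β then w_Ψ(α) > w_Ψ(β), and if α ≈_Ψ β then w_Ψ(α) = w_Ψ(β). -/
import Mathlib


/-- General preferences over a type `T` of trajectories (with binary chains). -/
inductive GenPref (T : Type) where
  /-- an atomic preference `φ_1 ◁ ⋯ ◁ φ_n`, a finite sequence of basic desires -/
  | atomic : (n : ℕ) → (Fin n → (T → Prop)) → GenPref T
  /-- `Ψ1 & Ψ2` -/
  | band : GenPref T → GenPref T → GenPref T
  /-- `Ψ1 | Ψ2` -/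
  | bor : GenPref T → GenPref T → GenPref T
  /-- `! Ψ1` -/
  | bnot : GenPref T → GenPref T
  /-- the binary chain `Ψ1 ◁ Ψ2` -/
  | chain : GenPref T → GenPref T → GenPref T

/-- The pair `(≺_Ψ, ≈_Ψ)` of the preferred and indistinguishable relations,
defined by mutual structural recursion on `Ψ`. -/
def GenPref.rel {T : Type} : GenPref T → ((T → T → Prop) × (T → T → Prop))
  | .atomic n φ =>
      (fun α β => ∃ i : Fin n, (φ i α ∧ ¬ φ i β) ∧ ∀ j : Fin n, j < i → (φ j α ↔ φ j β),
       fun α β => ∀ i : Fin n, φ i α ↔ φ i β)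
  | .band Ψ1 Ψ2 =>
      (fun α β => Ψ1.rel.1 α β ∧ Ψ2.rel.1 α β,
       fun α β => Ψ1.rel.2 α β ∧ Ψ2.rel.2 α β)
  | .bor Ψ1 Ψ2 =>
      (fun α β => (Ψ1.rel.1 α β ∧ Ψ2.rel.2 α β) ∨ (Ψ1.rel.2 α β ∧ Ψ2.rel.1 α β) ∨
        (Ψ1.rel.1 α β ∧ Ψ2.rel.1 α β),
       fun α β => Ψ1.rel.2 α β ∧ Ψ2.rel.2 α β)
  | .bnot Ψ1 =>
      (fun α β => Ψ1.rel.1 β α,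
       fun α β => Ψ1.rel.2 α β)
  | .chain Ψ1 Ψ2 =>
      (fun α β => Ψ1.rel.1 α β ∨ (Ψ1.rel.2 α β ∧ Ψ2.rel.1 α β),
       fun α β => Ψ1.rel.2 α β ∧ Ψ2.rel.2 α β)

/-- `α ≺_Ψ β` : `α` is preferred to `β` w.r.t. the general preference `Ψ`. -/
def GenPref.pref {T : Type} (Ψ : GenPref T) : T → T → Prop := Ψ.rel.1

/-- `α ≈_Ψ β` : `α` and `β` are indistinguishable w.r.t. `Ψ`. -/
def GenPref.indist {T : Type} (Ψ : GenPref T) : T → T → Prop := Ψ.rel.2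

open Classical in
/-- The weight function `w_Ψ : T → ℕ`, defined by structural recursion on `Ψ`.
Here `sSup (Set.range (GenPref.weight Ψ')) + 1` plays the role of `max(Ψ')`,
one plus the supremum over all trajectories of `w_{Ψ'}` (which exists since
each weight function is bounded). -/
noncomputable def GenPref.weight {T : Type} : GenPref T → T → ℕ
  | .atomic n φ, α => ∑ i : Fin n, 2 ^ (n - (i.val + 1)) * (if φ i α then 1 else 0)
  | .band Ψ1 Ψ2, α => Ψ1.weight α + Ψ2.weight α
  | .bor Ψ1 Ψ2, α => Ψ1.weight α + Ψ2.weight α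
  | .bnot Ψ1, α => (sSup (Set.range Ψ1.weight) + 1) - Ψ1.weight α
  | .chain Ψ1 Ψ2, α => (sSup (Set.range Ψ2.weight) + 1) * Ψ1.weight α + Ψ2.weight α

private lemma two_pow_sum (m : ℕ) : ∑ k ∈ Finset.range m, 2 ^ k = 2 ^ m - 1 := by
  induction m with
  | zero => simp
  | succ m ih =>
    rw [Finset.sum_range_succ, ih]
    have := Nat.one_le_two_pow (n := m)
    omega

private lemma bin_lt (n i : ℕ) (hi : i < n) (a b : ℕ → ℕ)
    (hb : ∀ j, b j ≤ 1) (hai : a i = 1) (hbi : b i = 0)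
    (hagree : ∀ j < i, a j = b j) :
    ∑ j ∈ Finset.range n, 2 ^ (n - j - 1) * b j <
      ∑ j ∈ Finset.range n, 2 ^ (n - j - 1) * a j := by
  have hsplit : ∀ c : ℕ → ℕ,
      ∑ j ∈ Finset.range n, 2 ^ (n - j - 1) * c j =
        ∑ j ∈ Finset.Ico 0 i, 2 ^ (n - j - 1) * c j +
        ∑ j ∈ Finset.Ico i n, 2 ^ (n - j - 1) * c j := by
    intro c
    rw [Finset.range_eq_Ico,
      ← Finset.sum_Ico_consecutive _ (Nat.zero_le i) (le_of_lt hi)]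
  rw [hsplit a, hsplit b]
  have hlow : ∑ j ∈ Finset.Ico 0 i, 2 ^ (n - j - 1) * a j =
      ∑ j ∈ Finset.Ico 0 i, 2 ^ (n - j - 1) * b j := by
    refine Finset.sum_congr rfl fun j hj => ?_
    rw [hagree j (Finset.mem_Ico.mp hj).2]
  rw [hlow]
  have hbsum : ∑ j ∈ Finset.Ico i n, 2 ^ (n - j - 1) * b j < 2 ^ (n - i - 1) := by
    rw [Finset.sum_eq_sum_Ico_succ_bot hi, hbi, mul_zero, zero_add]
    have h1 : ∑ j ∈ Finset.Ico (i + 1) n, 2 ^ (n - j - 1) * b j ≤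
        ∑ j ∈ Finset.Ico (i + 1) n, 2 ^ (n - j - 1) := by
      refine Finset.sum_le_sum fun j _ => ?_
      calc 2 ^ (n - j - 1) * b j ≤ 2 ^ (n - j - 1) * 1 :=
            Nat.mul_le_mul_left _ (hb j)
        _ = 2 ^ (n - j - 1) := mul_one _
    have h2 : ∑ j ∈ Finset.Ico (i + 1) n, 2 ^ (n - j - 1) = 2 ^ (n - i - 1) - 1 := by
      rw [Finset.sum_Ico_eq_sum_range]
      have : ∀ j ∈ Finset.range (n - (i + 1)), 2 ^ (n - (i + 1 + j) - 1) =
          2 ^ (n - (i + 1) - 1 - j) := by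
        intro j hj
        congr 1
        omega
      rw [Finset.sum_congr rfl this, Finset.sum_range_reflect (fun k => 2 ^ k),
        two_pow_sum]
      have hni : n - (i + 1) = n - i - 1 := by omega
      rw [hni]
    have h3 : 1 ≤ 2 ^ (n - i - 1) := Nat.one_le_two_pow
    omega
  have hasum : 2 ^ (n - i - 1) ≤ ∑ j ∈ Finset.Ico i n, 2 ^ (n - j - 1) * a j := by
    have : 2 ^ (n - i - 1) = 2 ^ (n - i - 1) * a i := by rw [hai, mul_one]
    rw [this]
    exact Finset.single_le_sum (f := fun j => 2 ^ (n - j - 1) * a j)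
      (fun j _ => Nat.zero_le _) (Finset.mem_Ico.mpr ⟨le_refl i, hi⟩)
  omega

open Classical in
private lemma GenPref.weight_bddAbove {T : Type} (Ψ : GenPref T) :
    BddAbove (Set.range Ψ.weight) := by
  induction Ψ with
  | atomic n φ =>
    refine ⟨∑ i : Fin n, 2 ^ (n - (i.val + 1)), ?_⟩
    rintro x ⟨γ, rfl⟩
    simp only [GenPref.weight]
    refine Finset.sum_le_sum fun i _ => ?_
    split_ifs <;> simp
  | band Ψ1 Ψ2 ih1 ih2 =>
    obtain ⟨B1, h1⟩ := ih1; obtain ⟨B2, h2⟩ := ih2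
    refine ⟨B1 + B2, ?_⟩
    rintro x ⟨γ, rfl⟩
    exact add_le_add (h1 (Set.mem_range_self γ)) (h2 (Set.mem_range_self γ))
  | bor Ψ1 Ψ2 ih1 ih2 =>
    obtain ⟨B1, h1⟩ := ih1; obtain ⟨B2, h2⟩ := ih2
    refine ⟨B1 + B2, ?_⟩
    rintro x ⟨γ, rfl⟩
    exact add_le_add (h1 (Set.mem_range_self γ)) (h2 (Set.mem_range_self γ))
  | bnot Ψ1 ih1 =>
    refine ⟨sSup (Set.range Ψ1.weight) + 1, ?_⟩
    rintro x ⟨γ, rfl⟩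
    simp only [GenPref.weight]
    omega
  | chain Ψ1 Ψ2 ih1 ih2 =>
    obtain ⟨B1, h1⟩ := ih1
    refine ⟨(sSup (Set.range Ψ2.weight) + 1) * B1 + sSup (Set.range Ψ2.weight), ?_⟩
    rintro x ⟨γ, rfl⟩
    simp only [GenPref.weight]
    exact add_le_add (Nat.mul_le_mul_left _ (h1 (Set.mem_range_self γ)))
      (le_csSup ih2 (Set.mem_range_self γ))

private lemma GenPref.weight_le_sSup {T : Type} (Ψ : GenPref T) (γ : T) :
    Ψ.weight γ ≤ sSup (Set.range Ψ.weight) :=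
  le_csSup Ψ.weight_bddAbove (Set.mem_range_self γ)

/-- For every general preference `Ψ`, the recursively defined weight function `w_Ψ`
is admissible: if `α ≺_Ψ β` then `w_Ψ(α) > w_Ψ(β)`, and if `α ≈_Ψ β` then
`w_Ψ(α) = w_Ψ(β)`. -/
theorem genPref_weight_admissible {T : Type} [Nonempty T] (Ψ : GenPref T) (α β : T) :
    (Ψ.pref α β → Ψ.weight α > Ψ.weight β) ∧
    (Ψ.indist α β → Ψ.weight α = Ψ.weight β) := by
  induction Ψ generalizing α β with
  | atomic n φ =>
    classical
    constructor
    · intro h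
      simp only [GenPref.pref, GenPref.rel] at h
      obtain ⟨i, ⟨hiα, hiβ⟩, hlt⟩ := h
      simp only [GenPref.weight, gt_iff_lt]
      set a : ℕ → ℕ := fun j => if h : j < n then (if φ ⟨j, h⟩ α then 1 else 0) else 0
        with ha
      set b : ℕ → ℕ := fun j => if h : j < n then (if φ ⟨j, h⟩ β then 1 else 0) else 0
        with hb
      have hA : ∑ j : Fin n, 2 ^ (n - (j.val + 1)) * (if φ j α then 1 else 0)
          = ∑ j ∈ Finset.range n, 2 ^ (n - j - 1) * a j := by
        rw [← Fin.sum_univ_eq_sum_range]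
        refine Finset.sum_congr rfl fun j _ => ?_
        simp [ha, j.isLt, Nat.sub_sub]
      have hB : ∑ j : Fin n, 2 ^ (n - (j.val + 1)) * (if φ j β then 1 else 0)
          = ∑ j ∈ Finset.range n, 2 ^ (n - j - 1) * b j := by
        rw [← Fin.sum_univ_eq_sum_range]
        refine Finset.sum_congr rfl fun j _ => ?_
        simp [hb, j.isLt, Nat.sub_sub]
      rw [hA, hB]
      refine bin_lt n i.val i.isLt a b ?_ ?_ ?_ ?_
      · intro j
        simp only [hb]
        split_ifs <;> simp
      · simp [ha, i.isLt, hiα]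
      · simp [hb, i.isLt, hiβ]
      · intro j hj
        have hjn : j < n := lt_trans hj i.isLt
        have := hlt ⟨j, hjn⟩ hj
        simp only [ha, hb, dif_pos hjn]
        split_ifs with h1 h2 <;> tauto
    · intro h
      simp only [GenPref.indist, GenPref.rel] at h
      simp only [GenPref.weight]
      exact Finset.sum_congr rfl fun i _ => by simp only [h i]
  | band Ψ1 Ψ2 ih1 ih2 =>
    simp only [GenPref.pref, GenPref.indist, GenPref.rel, GenPref.weight]
    constructor
    · rintro ⟨h1, h2⟩
      exact add_lt_add ((ih1 α β).1 h1) ((ih2 α β).1 h2)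
    · rintro ⟨h1, h2⟩
      rw [(ih1 α β).2 h1, (ih2 α β).2 h2]
  | bor Ψ1 Ψ2 ih1 ih2 =>
    simp only [GenPref.pref, GenPref.indist, GenPref.rel, GenPref.weight]
    constructor
    · rintro (⟨h1, h2⟩ | ⟨h1, h2⟩ | ⟨h1, h2⟩)
      · have := (ih1 α β).1 h1; have := (ih2 α β).2 h2; omega
      · have := (ih1 α β).2 h1; have := (ih2 α β).1 h2; omega
      · have := (ih1 α β).1 h1; have := (ih2 α β).1 h2; omega
    · rintro ⟨h1, h2⟩
      rw [(ih1 α β).2 h1, (ih2 α β).2 h2]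
  | bnot Ψ1 ih1 =>
    simp only [GenPref.pref, GenPref.indist, GenPref.rel, GenPref.weight]
    constructor
    · intro h
      have hlt := (ih1 β α).1 h
      have hα := Ψ1.weight_le_sSup α
      have hβ := Ψ1.weight_le_sSup β
      omega
    · intro h
      rw [(ih1 α β).2 h]
  | chain Ψ1 Ψ2 ih1 ih2 =>
    simp only [GenPref.pref, GenPref.indist, GenPref.rel, GenPref.weight]
    constructor
    · rintro (h1 | ⟨h1, h2⟩)
      · have hlt := (ih1 α β).1 h1
        have hβ := Ψ2.weight_le_sSup β
        have key := Nat.mul_le_mul_left (sSup (Set.range Ψ2.weight) + 1)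
          (show Ψ1.weight β + 1 ≤ Ψ1.weight α from hlt)
        rw [Nat.mul_succ] at key
        set A := (sSup (Set.range Ψ2.weight) + 1) * Ψ1.weight α
        set B := (sSup (Set.range Ψ2.weight) + 1) * Ψ1.weight β
        omega
      · rw [(ih1 α β).2 h1]
        exact Nat.add_lt_add_left ((ih2 α β).1 h2) _
    · rintro ⟨h1, h2⟩
      rw [(ih1 α β).2 h1, (ih2 α β).2 h2]
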